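/- Let (S,x) be a left generalized nonassociative Ore extension of a nonassociative ring R satisfying the left Euclidean division algorithm, and let I be a right ideal of S. Then the set J of all left leading coefficients of elements of I (together with 0) is a right ideal of R. -/

import Mathlib

open Finset
open scoped Classical

section Defs

variable {R : Type*} {S : Type*}

/-- Iterated power: `pw x 0 = 1`, `pw x (n+1) = pw x n * x`. -/
def pw [One S] [Mul S] (x : S) : ℕ → S
  | 0 => 1
  | n + 1 => pw x n * x

/-- `x` is power-associative. -/
def PowAssoc [One S] [Mul S] (x : S) : Prop := ∀ m n : ℕ, pw x m * pw x n = pw x (m + n)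

variable [NonAssocRing R] [NonAssocRing S]

/-- Interpret a finitely supported coefficient family as a left polynomial `Σ f(cᵢ)·xⁱ`. -/
noncomputable def lpoly (f : R →+* S) (x : S) (c : ℕ →₀ R) : S :=
  c.sum fun i r => f r * pw x i

/-- Right polynomial `Σ xⁱ·f(cᵢ)`. -/
noncomputable def rpoly (f : R →+* S) (x : S) (c : ℕ →₀ R) : S :=
  c.sum fun i r => pw x i * f r

/-- Left degree (`⊥` plays the role of `-∞`), computed from a representation as a
left polynomial in `x` (unique when `{1,x,x²,…}` is a left basis). -/
noncomputable def degl (f : R →+* S) (x : S) (p : S) : WithBot ℕ :=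
  if h : ∃ c : ℕ →₀ R, lpoly f x c = p then (Classical.choose h).support.max else ⊥

/-- Left leading coefficient (`0` for the zero polynomial). -/
noncomputable def lcl (f : R →+* S) (x : S) (p : S) : R :=
  if h : ∃ c : ℕ →₀ R, lpoly f x c = p then
    (Classical.choose h) (WithBot.unbotD 0 (Classical.choose h).support.max) else 0

/-- Right degree. -/
noncomputable def degr (f : R →+* S) (x : S) (p : S) : WithBot ℕ :=
  if h : ∃ c : ℕ →₀ R, rpoly f x c = p then (Classical.choose h).support.max else ⊥

/-- Right leading coefficient. -/
noncomputable def lcr (f : R →+* S) (x : S) (p : S) : R :=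
  if h : ∃ c : ℕ →₀ R, rpoly f x c = p then
    (Classical.choose h) (WithBot.unbotD 0 (Classical.choose h).support.max) else 0

/-- `(S,x)` is a left generalized nonassociative Ore extension of `R`
(with the embedding `f : R →+* S`). -/
structure IsLeftGNOE (f : R →+* S) (x : S) : Prop where
  inj : Function.Injective f
  powAssoc : PowAssoc x
  basis : Function.Bijective (lpoly f x)
  closed : ∀ (m n : ℕ) (r s : R), ∃ c : ℕ →₀ R,
    lpoly f x c = (f r * pw x m) * (f s * pw x n) ∧ ∀ i, m + n < i → c i = 0

/-- `(S,x)` is a right generalized nonassociative Ore extension of `R`. -/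
structure IsRightGNOE (f : R →+* S) (x : S) : Prop where
  inj : Function.Injective f
  powAssoc : PowAssoc x
  basis : Function.Bijective (rpoly f x)
  closed : ∀ (m n : ℕ) (r s : R), ∃ c : ℕ →₀ R,
    rpoly f x c = (pw x m * f r) * (pw x n * f s) ∧ ∀ i, m + n < i → c i = 0

/-- Right ideal of a (nonassociative) ring. -/
def IsRightIdeal (T : Type*) [NonAssocRing T] (I : Set T) : Prop :=
  (0 : T) ∈ I ∧ (∀ a b, a ∈ I → b ∈ I → a + b ∈ I) ∧ (∀ a, a ∈ I → -a ∈ I) ∧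
    ∀ a t, a ∈ I → a * t ∈ I

/-- Left ideal of a (nonassociative) ring. -/
def IsLeftIdeal (T : Type*) [NonAssocRing T] (I : Set T) : Prop :=
  (0 : T) ∈ I ∧ (∀ a b, a ∈ I → b ∈ I → a + b ∈ I) ∧ (∀ a, a ∈ I → -a ∈ I) ∧
    ∀ a t, a ∈ I → t * a ∈ I

/-- The right ideal generated by a set. -/
def rIdealGen (T : Type*) [NonAssocRing T] (G : Set T) : Set T :=
  ⋂₀ {I : Set T | IsRightIdeal T I ∧ G ⊆ I}

/-- The left ideal generated by a set. -/
def lIdealGen (T : Type*) [NonAssocRing T] (G : Set T) : Set T :=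
  ⋂₀ {I : Set T | IsLeftIdeal T I ∧ G ⊆ I}

/-- Right Noetherian: every right ideal is finitely generated. -/
def RightNoeth (T : Type*) [NonAssocRing T] : Prop :=
  ∀ I : Set T, IsRightIdeal T I → ∃ G : Finset T, I = rIdealGen T ↑G

/-- Left Noetherian: every left ideal is finitely generated. -/
def LeftNoeth (T : Type*) [NonAssocRing T] : Prop :=
  ∀ I : Set T, IsLeftIdeal T I → ∃ G : Finset T, I = lIdealGen T ↑G

/-- `M` is a right `R`-submodule of `S` (via `f`). -/
def IsRightRSub (f : R →+* S) (M : Set S) : Prop :=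
  (0 : S) ∈ M ∧ (∀ a b, a ∈ M → b ∈ M → a + b ∈ M) ∧ (∀ a, a ∈ M → -a ∈ M) ∧
    ∀ a r, a ∈ M → a * f r ∈ M

/-- `M` is a left `R`-submodule of `S` (via `f`). -/
def IsLeftRSub (f : R →+* S) (M : Set S) : Prop :=
  (0 : S) ∈ M ∧ (∀ a b, a ∈ M → b ∈ M → a + b ∈ M) ∧ (∀ a, a ∈ M → -a ∈ M) ∧
    ∀ a r, a ∈ M → f r * a ∈ M

/-- The right `R`-submodule of `S` generated by a set. -/
def rSubGen (f : R →+* S) (G : Set S) : Set S :=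
  ⋂₀ {M : Set S | IsRightRSub f M ∧ G ⊆ M}

/-- `s` belongs to the right ideal of `S` generated by `p 0, …, p (n-1)` and admits a
left-degree-additive representation `s = Σⱼ (⋯((p_{iⱼ} s_{j1})s_{j2})⋯)s_{jm}` whose degree
bound `max_j (deg_l p_{iⱼ} + Σₖ deg_l s_{jk})` equals `deg_l s`. -/
def LDegAddMem (f : R →+* S) (x : S) {n : ℕ} (p : Fin n → S) (s : S) : Prop :=
  ∃ L : List (Fin n × List S),
    s = (L.map fun t => t.2.foldl (· * ·) (p t.1)).sum ∧
    degl f x s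
      = (L.map fun t => degl f x (p t.1) + (t.2.map (degl f x)).sum).foldr max ⊥

/-- `s` belongs to the left ideal of `S` generated by `p 0, …, p (n-1)` and admits a
right-degree-additive representation. -/
def RDegAddMem (f : R →+* S) (x : S) {n : ℕ} (p : Fin n → S) (s : S) : Prop :=
  ∃ L : List (Fin n × List S),
    s = (L.map fun t => t.2.foldl (fun b a => a * b) (p t.1)).sum ∧
    degr f x s
      = (L.map fun t => degr f x (p t.1) + (t.2.map (degr f x)).sum).foldr max ⊥

/-- The left Euclidean division algorithm for `(S,x)` over `R`. -/
def LeftEDA (f : R →+* S) (x : S) : Prop :=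
  ∀ (n : ℕ) (p : Fin n → S) (q : S), q ≠ 0 →
    (∀ i, degl f x (p i) ≤ degl f x q) →
    lcl f x q ∈ rIdealGen R (Set.range fun i => lcl f x (p i)) →
    ∃ s, LDegAddMem f x p s ∧ degl f x (q - s) < degl f x q

/-- The right Euclidean division algorithm for `(S,x)` over `R`. -/
def RightEDA (f : R →+* S) (x : S) : Prop :=
  ∀ (n : ℕ) (p : Fin n → S) (q : S), q ≠ 0 →
    (∀ i, degr f x (p i) ≤ degr f x q) →
    lcr f x q ∈ lIdealGen R (Set.range fun i => lcr f x (p i)) →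
    ∃ s, RDegAddMem f x p s ∧ degr f x (q - s) < degr f x q

/-- The maps `πᵢᵐ`: the sum of all `C(m,i)` compositions of `i` copies of `σ`
and `m - i` copies of `δ`. -/
def pimap (σ δ : R → R) : ℕ → ℕ → R → R
  | 0, 0 => id
  | _ + 1, 0 => fun _ => 0
  | 0, m + 1 => fun r => δ (pimap σ δ 0 m r)
  | i + 1, m + 1 => fun r => σ (pimap σ δ i m r) + δ (pimap σ δ (i + 1) m r)

/-- `(S,x)` realizes the generalized polynomial ring `R[X;σ,δ]`: `{1,x,x²,…}` is a left
`R`-basis and multiplication is given by `(rxᵐ)(sxⁿ) = Σᵢ (r πᵢᵐ(s)) x^{i+n}`. -/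
def IsGPolyRing (σ δ : R → R) (f : R →+* S) (x : S) : Prop :=
  Function.Injective f ∧ PowAssoc x ∧ Function.Bijective (lpoly f x) ∧
    ∀ (r s : R) (m n : ℕ),
      (f r * pw x m) * (f s * pw x n)
        = ∑ i ∈ Finset.range (m + 1), f (r * pimap σ δ i m s) * pw x (i + n)

/-- `(S,x)` realizes the flipped generalized polynomial ring `R[X;σ,δ]^fl`:
multiplication is given by `(rxᵐ)(sxⁿ) = Σᵢ τₙ(r, πᵢᵐ(s)) x^{i+n}`. -/
def IsFlipGPolyRing (σ δ : R → R) (f : R →+* S) (x : S) : Prop :=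
  Function.Injective f ∧ PowAssoc x ∧ Function.Bijective (lpoly f x) ∧
    ∀ (r s : R) (m n : ℕ),
      (f r * pw x m) * (f s * pw x n)
        = ∑ i ∈ Finset.range (m + 1),
            f (if Even n then r * pimap σ δ i m s else pimap σ δ i m s * r) * pw x (i + n)

end Defs

section AuxProof

variable {R : Type*} {S : Type*} [NonAssocRing R] [NonAssocRing S]

lemma lpoly_zero (f : R →+* S) (x : S) : lpoly f x 0 = 0 := by
  simp [lpoly]

lemma lpoly_add (f : R →+* S) (x : S) (c d : ℕ →₀ R) :
    lpoly f x (c + d) = lpoly f x c + lpoly f x d := by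
  unfold lpoly
  apply Finsupp.sum_add_index' <;> intros <;> simp [add_mul]

lemma lpoly_sub (f : R →+* S) (x : S) (c d : ℕ →₀ R) :
    lpoly f x (c - d) = lpoly f x c - lpoly f x d := by
  have := lpoly_add f x (c - d) d
  rw [sub_add_cancel] at this
  rw [this]; abel

lemma lpoly_single (f : R →+* S) (x : S) (n : ℕ) (b : R) :
    lpoly f x (Finsupp.single n b) = f b * pw x n := by
  unfold lpoly
  rw [Finsupp.sum_single_index]
  simp

lemma degl_lpoly {f : R →+* S} {x : S} (hb : Function.Bijective (lpoly f x)) (c : ℕ →₀ R) :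
    degl f x (lpoly f x c) = c.support.max := by
  have h : ∃ d : ℕ →₀ R, lpoly f x d = lpoly f x c := ⟨c, rfl⟩
  rw [degl, dif_pos h, hb.injective (Classical.choose_spec h)]

lemma lcl_lpoly {f : R →+* S} {x : S} (hb : Function.Bijective (lpoly f x)) (c : ℕ →₀ R) :
    lcl f x (lpoly f x c) = c (WithBot.unbotD 0 c.support.max) := by
  have h : ∃ d : ℕ →₀ R, lpoly f x d = lpoly f x c := ⟨c, rfl⟩
  rw [lcl, dif_pos h, hb.injective (Classical.choose_spec h)]

lemma lcl_zero {f : R →+* S} {x : S} (hb : Function.Bijective (lpoly f x)) :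
    lcl f x 0 = 0 := by
  have := lcl_lpoly hb 0
  rw [lpoly_zero] at this
  simpa using this

lemma isRightIdeal_rIdealGen (T : Type*) [NonAssocRing T] (G : Set T) :
    IsRightIdeal T (rIdealGen T G) := by
  refine ⟨?_, ?_, ?_, ?_⟩
  · intro J hJ; exact hJ.1.1
  · intro a b ha hb J hJ; exact hJ.1.2.1 a b (ha J hJ) (hb J hJ)
  · intro a ha J hJ; exact hJ.1.2.2.1 a (ha J hJ)
  · intro a t ha J hJ; exact hJ.1.2.2.2 a t (ha J hJ)

lemma subset_rIdealGen (T : Type*) [NonAssocRing T] (G : Set T) :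
    G ⊆ rIdealGen T G := by
  intro g hg J hJ; exact hJ.2 hg

lemma lsum_mem' {T : Type*} [NonAssocRing T] {I : Set T} (hI : IsRightIdeal T I)
    (l : List T) (hl : ∀ a ∈ l, a ∈ I) : l.sum ∈ I := by
  induction l with
  | nil => exact hI.1
  | cons a l ih =>
    rw [List.sum_cons]
    exact hI.2.1 _ _ (hl a (by simp)) (ih fun b hb => hl b (by simp [hb]))

lemma lfoldl_mem' {T : Type*} [NonAssocRing T] {I : Set T} (hI : IsRightIdeal T I)
    (l : List T) (a : T) (ha : a ∈ I) : l.foldl (· * ·) a ∈ I := by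
  induction l generalizing a with
  | nil => exact ha
  | cons b l ih => exact ih _ (hI.2.2.2 a b ha)

/-- The key lemma: any nonzero element of the right ideal of `R` generated by the left
leading coefficients of finitely many elements of `I` is itself a left leading
coefficient of an element of `I`. -/
lemma key_lemma {f : R →+* S} {x : S} (h : IsLeftGNOE f x) (hED : LeftEDA f x)
    {I : Set S} (hI : IsRightIdeal S I) {n : ℕ} (p : Fin n → S) (hp : ∀ i, p i ∈ I)
    (b : R) (hb0 : b ≠ 0)
    (hmem : b ∈ rIdealGen R (Set.range fun i => lcl f x (p i))) :
    b ∈ lcl f x '' I := by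
  classical
  -- choose a degree bound N
  set N : ℕ := Finset.univ.sup (fun i : Fin n => WithBot.unbotD 0 (degl f x (p i))) with hN
  have hdegle : ∀ i, degl f x (p i) ≤ (N : WithBot ℕ) := by
    intro i
    cases hdi : degl f x (p i) with
    | bot => exact bot_le
    | coe m =>
      have : m ≤ N := by
        have := Finset.le_sup (f := fun i : Fin n => WithBot.unbotD 0 (degl f x (p i)))
          (Finset.mem_univ i)
        simpa [hdi] using this
      exact WithBot.coe_le_coe.mpr this
  -- the test polynomial q' = b·xᴺ
  set c : ℕ →₀ R := Finsupp.single N b with hc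
  have hcsupp : c.support = {N} := Finsupp.support_single_ne_zero N hb0
  set q' : S := lpoly f x c with hq'
  have hdq' : degl f x q' = (N : WithBot ℕ) := by
    rw [hq', degl_lpoly h.basis, hcsupp]; rfl
  have hlcq' : lcl f x q' = b := by
    rw [hq', lcl_lpoly h.basis, hcsupp]
    simp [hc]
  have hq'ne : q' ≠ 0 := by
    intro hz
    rw [hz, lcl_zero h.basis] at hlcq'
    exact hb0 hlcq'.symm
  -- apply the Euclidean division algorithm
  obtain ⟨s, ⟨L, hsum, _⟩, hlt⟩ :=
    hED n p q' hq'ne (fun i => (hdegle i).trans hdq'.ge) (by rwa [hlcq'])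
  -- s ∈ I
  have hsI : s ∈ I := by
    rw [hsum]
    refine lsum_mem' hI _ ?_
    intro a ha
    rw [List.mem_map] at ha
    obtain ⟨t, _, rfl⟩ := ha
    exact lfoldl_mem' hI _ _ (hp t.1)
  -- compute lcl s = b
  obtain ⟨d, hd⟩ := h.basis.surjective (q' - s)
  have hdlt : (d.support.max : WithBot ℕ) < (N : WithBot ℕ) := by
    have := degl_lpoly h.basis d
    rw [hd] at this
    rw [this, hdq'] at hlt
    exact hlt
  have hdN : ∀ i : ℕ, N ≤ i → d i = 0 := by
    intro i hi
    by_contra hne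
    have hiS : i ∈ d.support := Finsupp.mem_support_iff.mpr hne
    have : (i : WithBot ℕ) ≤ d.support.max := Finset.le_max hiS
    have : (i : WithBot ℕ) < (N : WithBot ℕ) := lt_of_le_of_lt this hdlt
    exact absurd (WithBot.coe_lt_coe.mp this) (not_lt.mpr hi)
  have hsrep : s = lpoly f x (c - d) := by
    rw [lpoly_sub, ← hq', hd]; abel
  set e : ℕ →₀ R := c - d with he
  have heN : e N = b := by
    simp [he, hc, Finsupp.single_eq_same, hdN N le_rfl]
  have hemax : e.support.max = (N : WithBot ℕ) := by
    apply le_antisymm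
    · apply Finset.max_le
      intro i hi
      by_contra hgt
      push_neg at hgt
      have hiN : N < i := WithBot.coe_lt_coe.mp hgt
      have : e i = 0 := by
        simp [he, hc, Finsupp.single_eq_of_ne' (Nat.ne_of_lt hiN), hdN i hiN.le]
      exact Finsupp.mem_support_iff.mp hi this
    · exact Finset.le_max (Finsupp.mem_support_iff.mpr (heN ▸ hb0))
  have hlcs : lcl f x s = b := by
    rw [hsrep, lcl_lpoly h.basis, hemax]
    simpa using heN
  exact ⟨s, hsI, hlcs⟩

end AuxProof

/-- the set of left leading coefficients of a right ideal of `S`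
is a right ideal of `R`. -/
theorem stmt9 {R S : Type*} [NonAssocRing R] [NonAssocRing S] (f : R →+* S) (x : S)
    (h : IsLeftGNOE f x) (hED : LeftEDA f x)
    (I : Set S) (hI : IsRightIdeal S I) :
    IsRightIdeal R (lcl f x '' I) := by
  have h0 : (0 : R) ∈ lcl f x '' I := ⟨0, hI.1, lcl_zero h.basis⟩
  refine ⟨h0, ?_, ?_, ?_⟩
  · rintro a b ⟨p, hpI, rfl⟩ ⟨q, hqI, rfl⟩
    by_cases hz : lcl f x p + lcl f x q = 0
    · rw [hz]; exact h0
    · refine key_lemma h hED hI ![p, q] ?_ _ hz ?_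
      · intro i; fin_cases i <;> assumption
      · have h1 : lcl f x p ∈ rIdealGen R (Set.range fun i => lcl f x (![p, q] i)) :=
          subset_rIdealGen R _ ⟨0, rfl⟩
        have h2 : lcl f x q ∈ rIdealGen R (Set.range fun i => lcl f x (![p, q] i)) :=
          subset_rIdealGen R _ ⟨1, rfl⟩
        exact (isRightIdeal_rIdealGen R _).2.1 _ _ h1 h2
  · rintro a ⟨p, hpI, rfl⟩
    by_cases hz : -lcl f x p = 0
    · rw [hz]; exact h0
    · refine key_lemma h hED hI ![p] (fun i => by fin_cases i <;> assumption) _ hz ?_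
      exact (isRightIdeal_rIdealGen R _).2.2.1 _ (subset_rIdealGen R _ ⟨0, rfl⟩)
  · rintro a r ⟨p, hpI, rfl⟩
    by_cases hz : lcl f x p * r = 0
    · rw [hz]; exact h0
    · refine key_lemma h hED hI ![p] (fun i => by fin_cases i <;> assumption) _ hz ?_
      exact (isRightIdeal_rIdealGen R _).2.2.2 _ r (subset_rIdealGen R _ ⟨0, rfl⟩)
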